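/- arXiv:1409.2677 — 4 statements merged into one kernel-verified Lean document; each statement's English description precedes it below -/
import Mathlib

section
/- Suppose the n×m matrix P has rank m and set A = (P'P)^{-1} P'. Fix i with f_i > 0, let p_i denote the i-th row of P, and define the n-vectors U and V by U' = u' A and V' = v' A, where u' = t' diag(p_i) (i.e., u_j = t_j p_{ij}) and v' = p_i. Then the posterior expectation E{t(Θ) | X = x_i} = Σ_j t_j p_{ij} g_j / f_i can be written purely in terms of the marginal f = P g as E{t(Θ) | X = x_i} = U' f / V' f (Bayes rule in terms of f), provided V' f ≠ 0. -/
/-! Full column rank makes `PᵀP` invertible, so `A = (PᵀP)⁻¹Pᵀ` is a left inverse of `P` and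
recovers the prior from the marginal: `A f = g`. Hence `U'f = u'g = ∑ⱼ tⱼ pᵢⱼ gⱼ` and
`V'f = v'g = fᵢ`. -/

open Matrix

namespace Matrix

variable {m n R : Type*} [Fintype m] [Fintype n] [DecidableEq m] [Field R]

theorem isUnit_of_rank_eq_card {B : Matrix m m R} (h : B.rank = Fintype.card m) : IsUnit B := by
  rw [← mulVec_surjective_iff_isUnit, ← coe_mulVecLin, ← LinearMap.range_eq_top]
  apply Submodule.eq_top_of_finrank_eq
  rw [← rank, h, Module.finrank_fintype_fun_eq_card]

theorem isUnit_transpose_mul_self_of_rank_eq_card [LinearOrder R] [IsStrictOrderedRing R]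
    {P : Matrix n m R} (h : P.rank = Fintype.card m) : IsUnit (Pᵀ * P) :=
  isUnit_of_rank_eq_card (by rw [rank_transpose_mul_self, h])

theorem inv_transpose_mul_self_mul_transpose_mul_cancel [LinearOrder R] [IsStrictOrderedRing R]
    {P : Matrix n m R} (h : P.rank = Fintype.card m) : (Pᵀ * P)⁻¹ * Pᵀ * P = 1 := by
  rw [Matrix.mul_assoc, nonsing_inv_mul _
    ((isUnit_iff_isUnit_det _).mp (isUnit_transpose_mul_self_of_rank_eq_card h))]

theorem vecMul_dotProduct_mulVec_of_mul_eq_one {A : Matrix m n R} {P : Matrix n m R}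
    (hAP : A * P = 1) (w g : m → R) : A.vecMul w ⬝ᵥ P *ᵥ g = w ⬝ᵥ g := by
  rw [← dotProduct_mulVec, mulVec_mulVec, hAP, one_mulVec]

end Matrix

theorem stmt2_general {m n : ℕ} (P : Matrix (Fin n) (Fin m) ℝ) (hrank : P.rank = m)
    (g : Fin m → ℝ)
    (f : Fin n → ℝ) (hf : f = P.mulVec g)
    (t : Fin m → ℝ) (i : Fin n)
    (A : Matrix (Fin m) (Fin n) ℝ) (hA : A = (Pᵀ * P)⁻¹ * Pᵀ)
    (u v : Fin m → ℝ) (hu : ∀ j, u j = t j * P i j) (hv : ∀ j, v j = P i j)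
    (U V : Fin n → ℝ) (hU : U = A.vecMul u) (hV : V = A.vecMul v) :
    (∑ j, t j * P i j * g j) / f i = (U ⬝ᵥ f) / (V ⬝ᵥ f) := by
  have hAP : A * P = 1 :=
    hA ▸ inv_transpose_mul_self_mul_transpose_mul_cancel (by rwa [Fintype.card_fin])
  have hUf : U ⬝ᵥ f = ∑ j, t j * P i j * g j := by
    rw [hU, hf, vecMul_dotProduct_mulVec_of_mul_eq_one hAP]
    exact Finset.sum_congr rfl fun j _ => by rw [hu]
  have hVf : V ⬝ᵥ f = f i := by
    rw [hV, hf, vecMul_dotProduct_mulVec_of_mul_eq_one hAP]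
    exact Finset.sum_congr rfl fun j _ => by rw [hv]
  rw [hUf, hVf]

/-- Bayes rule in terms of `f`: with `A = (PᵀP)⁻¹Pᵀ`, `u' = t' diag(pᵢ)`, `v' = pᵢ`,
`U' = u'A`, `V' = v'A`, the posterior expectation `E{t(Θ) | X = xᵢ} = ∑ⱼ tⱼ pᵢⱼ gⱼ / fᵢ`
equals `U'f / V'f`, provided `V'f ≠ 0`. -/
theorem stmt2 {m n : ℕ} (P : Matrix (Fin n) (Fin m) ℝ) (hrank : P.rank = m)
    (g : Fin m → ℝ) (hg0 : ∀ j, 0 ≤ g j) (hg1 : ∑ j, g j = 1)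
    (hP0 : ∀ i j, 0 ≤ P i j) (hP1 : ∀ j, ∑ i, P i j = 1)
    (f : Fin n → ℝ) (hf : f = P.mulVec g)
    (t : Fin m → ℝ) (i : Fin n) (hfi : 0 < f i)
    (A : Matrix (Fin m) (Fin n) ℝ) (hA : A = (Pᵀ * P)⁻¹ * Pᵀ)
    (u v : Fin m → ℝ) (hu : ∀ j, u j = t j * P i j) (hv : ∀ j, v j = P i j)
    (U V : Fin n → ℝ) (hU : U = A.vecMul u) (hV : V = A.vecMul v)
    (hVf : V ⬝ᵥ f ≠ 0) :
    (∑ j, t j * P i j * g j) / f i = (U ⬝ᵥ f) / (V ⬝ᵥ f) :=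
  stmt2_general P hrank g f hf t i A hA u v hu hv U V hU hV
end

section
/- (Lemma 1: Fisher information for g-modeling.) Let P be a real n×m matrix with nonnegative entries each of whose columns sums to 1, let Q be a real m×q matrix, let g(α) = e^{Qα − 1_m φ(α)} with φ(α) = log Σ_j e^{Q_j α} be the exponential family prior, and suppose the marginal f(α) = P g(α) has all components positive. Let y be the multinomial count vector from N i.i.d. categorical draws with distribution f(α), and define the score vector s = Q_α' P' diag(1/f(α)) y ∈ ℝ^q, where Q_α = (diag(g(α)) − g(α) g(α)') Q. Then the covariance matrix of s equals I = N Q_α' P' diag(1/f(α)) P Q_α; that is, for all 1 ≤ k, l ≤ q, Cov(s_k, s_l) = N (Q_α' P' diag(1/f(α)) P Q_α)_{kl}. -/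
/-!
The score is a sum over draws, `s_k = ∑_t a_k (I_t)` with `a_k` the `k`-th row of
`Q_α' P' diag(1/f)`. Independent draws have no cross covariances, so
`Cov(s_k, s_l) = N (∑_i f_i a_ki a_li - (∑_i f_i a_ki) (∑_i f_i a_li))`.
Since `f_i a_ki = (P Q_α)_ik` and `P` is column-stochastic, the mean `∑_i f_i a_ki` is the
`k`-th column sum of `Q_α`, which vanishes because the softmax Jacobian `diag(g) - g g'` has
zero column sums; the second moment is the `(k, l)` entry of `Q_α' P' diag(1/f) P Q_α`.
-/

open MeasureTheory ProbabilityTheory Matrix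

section Discrete

variable {Ω ι : Type*} [MeasurableSpace Ω] {μ : Measure Ω}
  [Fintype ι] [MeasurableSpace ι] [DiscreteMeasurableSpace ι]

lemma integral_comp_eq_sum [IsFiniteMeasure μ] {X : Ω → ι} (hX : Measurable X)
    (a : ι → ℝ) :
    ∫ ω, a (X ω) ∂μ = ∑ i, μ.real {ω | X ω = i} * a i := by
  rw [← integral_map hX.aemeasurable .of_discrete, integral_fintype .of_finite]
  simp [map_measureReal_apply hX (.of_discrete), Set.preimage, smul_eq_mul]

lemma memLp_comp_of_finite [IsFiniteMeasure μ] {X : Ω → ι} (hX : Measurable X) (a : ι → ℝ)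
    (p : ENNReal) : MemLp (fun ω => a (X ω)) p μ :=
  MemLp.of_discrete.comp_of_map hX.aemeasurable

lemma covariance_comp_comp [IsProbabilityMeasure μ] {X : Ω → ι} (hX : Measurable X)
    (a b : ι → ℝ) :
    cov[fun ω => a (X ω), fun ω => b (X ω); μ]
      = ∑ i, μ.real {ω | X ω = i} * a i * b i
        - (∑ i, μ.real {ω | X ω = i} * a i) * ∑ i, μ.real {ω | X ω = i} * b i := by
  rw [covariance_eq_sub (memLp_comp_of_finite hX a 2) (memLp_comp_of_finite hX b 2)]
  simp only [Pi.mul_apply]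
  rw [integral_comp_eq_sum hX (fun i => a i * b i), integral_comp_eq_sum hX,
    integral_comp_eq_sum hX]
  simp only [mul_assoc]

lemma covariance_sum_comp_of_iIndepFun [IsProbabilityMeasure μ] {T : Type*} [Fintype T]
    {X : T → Ω → ι} (hX : ∀ t, Measurable (X t)) (hind : iIndepFun X μ)
    {p : ι → ℝ} (hp : ∀ t i, μ.real {ω | X t ω = i} = p i) (a b : ι → ℝ) :
    cov[fun ω => ∑ t, a (X t ω), fun ω => ∑ t, b (X t ω); μ]
      = Fintype.card T * (∑ i, p i * a i * b i - (∑ i, p i * a i) * ∑ i, p i * b i) := by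
  rw [covariance_fun_sum_fun_sum (fun t => memLp_comp_of_finite (hX t) a 2)
    (fun t => memLp_comp_of_finite (hX t) b 2)]
  have hcross : ∀ t u, t ≠ u → cov[fun ω => a (X t ω), fun ω => b (X u ω); μ] = 0 :=
    fun t u htu => ((hind.indepFun htu).comp .of_discrete .of_discrete).covariance_eq_zero
      (memLp_comp_of_finite (hX t) a 2) (memLp_comp_of_finite (hX u) b 2)
  rw [Finset.sum_congr rfl fun t _ => Finset.sum_eq_single t
    (fun u _ hut => hcross t u (Ne.symm hut)) (by simp)]
  simp [covariance_comp_comp (hX _), hp, mul_sub]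

end Discrete

lemma sum_mul_card_filter_eq_sum_comp {T ι R : Type*} [Fintype T] [Fintype ι]
    [DecidableEq ι] [CommSemiring R] (I : T → ι) (a : ι → R) :
    ∑ i, a i * ((Finset.univ.filter fun t => I t = i).card : R) = ∑ t, a (I t) := by
  simp only [Finset.card_filter, Nat.cast_sum, Nat.cast_ite, Nat.cast_one, Nat.cast_zero,
    Finset.mul_sum, mul_ite, mul_one, mul_zero]
  rw [Finset.sum_comm]
  simp

section Softmax

variable {ι κ : Type*} [Fintype ι]

lemma sum_exp_sub_log_sum_exp [Nonempty ι] (x : ι → ℝ) :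
    ∑ j, Real.exp (x j - Real.log (∑ l, Real.exp (x l))) = 1 := by
  have hpos : 0 < ∑ l, Real.exp (x l) :=
    Finset.sum_pos (fun _ _ => Real.exp_pos _) Finset.univ_nonempty
  simp_rw [Real.exp_sub, Real.exp_log hpos, ← Finset.sum_div, div_self hpos.ne']

variable [DecidableEq ι]

lemma sum_diagonal_sub_vecMulVec_mul_apply {g : ι → ℝ} (hg : ∑ j, g j = 1)
    (Q : Matrix ι κ ℝ) (k : κ) : ∑ j, ((diagonal g - vecMulVec g g) * Q) j k = 0 := by
  simp [mul_apply, sub_mul, diagonal_apply, vecMulVec_apply, Finset.sum_sub_distrib,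
    Finset.sum_comm (γ := ι), ← Finset.sum_mul, hg]

lemma sum_softmax_jacobian_mul_apply {x g : ι → ℝ}
    (hg : ∀ j, g j = Real.exp (x j - Real.log (∑ l, Real.exp (x l))))
    (Q : Matrix ι κ ℝ) (k : κ) : ∑ j, ((diagonal g - vecMulVec g g) * Q) j k = 0 := by
  cases isEmpty_or_nonempty ι
  · simp
  · refine sum_diagonal_sub_vecMulVec_mul_apply ?_ Q k
    simp_rw [hg]
    exact sum_exp_sub_log_sum_exp x

end Softmax

lemma sum_mul_apply_of_sum_col_eq_one {ι ι' κ R : Type*} [Fintype ι] [Fintype ι']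
    [CommSemiring R] {P : Matrix ι' ι R} (hP : ∀ j, ∑ i, P i j = 1) (M : Matrix ι κ R)
    (k : κ) :
    ∑ i, (P * M) i k = ∑ j, M j k := by
  simp [mul_apply, Finset.sum_comm (γ := ι'), ← Finset.sum_mul, hP]

theorem stmt14_general {Ω : Type*} [MeasurableSpace Ω] (μ : Measure Ω) [IsProbabilityMeasure μ]
    {n m q N : ℕ} (P : Matrix (Fin n) (Fin m) ℝ)
    (hP1 : ∀ j, ∑ i, P i j = 1)
    (Q : Matrix (Fin m) (Fin q) ℝ) (α : Fin q → ℝ)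
    (g : Fin m → ℝ)
    (hg : ∀ j, g j = Real.exp ((∑ k, Q j k * α k)
      - Real.log (∑ l, Real.exp (∑ k, Q l k * α k))))
    (f : Fin n → ℝ) (hfpos : ∀ i, 0 < f i)
    (Qα : Matrix (Fin m) (Fin q) ℝ)
    (hQα : Qα = (Matrix.diagonal g - Matrix.of (fun j j' => g j * g j')) * Q)
    (I : Fin N → Ω → Fin n) (hmeas : ∀ k, Measurable (I k))
    (hdist : ∀ k i, (μ {ω | I k ω = i}).toReal = f i)
    (hindep : iIndepFun I μ)
    (y : Fin n → Ω → ℕ)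
    (hy : ∀ i ω, y i ω = (Finset.univ.filter (fun k => I k ω = i)).card)
    (s : Fin q → Ω → ℝ)
    (hs : ∀ k ω, s k ω
      = ∑ i, (Qαᵀ * Pᵀ * Matrix.diagonal (fun i' => (f i')⁻¹)) k i * (y i ω : ℝ)) :
    ∀ k l, ∫ ω, (s k ω - ∫ ω', s k ω' ∂μ) * (s l ω - ∫ ω', s l ω' ∂μ) ∂μ
      = N * (Qαᵀ * Pᵀ * Matrix.diagonal (fun i => (f i)⁻¹) * P * Qα) k l := by
  have hcol : ∀ k, ∑ j, Qα j k = 0 := by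
    subst hQα
    exact sum_softmax_jacobian_mul_apply hg Q
  generalize hA : Qαᵀ * Pᵀ * diagonal (fun i => (f i)⁻¹) = A at hs ⊢
  have hAf : ∀ k i, f i * A k i = (P * Qα) i k := fun k i => by
    simp only [← hA, mul_diagonal, ← transpose_mul, transpose_apply]
    field_simp [(hfpos i).ne']
  have hscore : ∀ k, s k = fun ω => ∑ t, A k (I t ω) := fun k => funext fun ω => by
    rw [hs]
    simp only [hy]
    exact sum_mul_card_filter_eq_sum_comp _ _
  have hmean : ∀ k, ∑ i, f i * A k i = 0 := fun k => by
    rw [Finset.sum_congr rfl fun i _ => hAf k i, sum_mul_apply_of_sum_col_eq_one hP1, hcol]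
  intro k l
  change cov[s k, s l; μ] = _
  rw [hscore k, hscore l, covariance_sum_comp_of_iIndepFun hmeas hindep hdist, hmean k,
    Fintype.card_fin, zero_mul, sub_zero, Matrix.mul_assoc, mul_apply]
  refine congrArg _ (Finset.sum_congr rfl fun i _ => ?_)
  rw [← hAf]
  ring

/-- Lemma 1 (Fisher information for g-modeling): with the exponential family prior
`g(α) = exp(Qα − 1φ(α))`, marginal `f(α) = P g(α)` (all components positive), and `y`
the multinomial count vector of `N` i.i.d. draws from `f(α)`, the score vector
`s = Q_α' P' diag(1/f(α)) y` has covariance matrix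
`I = N Q_α' P' diag(1/f(α)) P Q_α`, where `Q_α = (diag(g(α)) − g(α)g(α)')Q`. -/
theorem stmt14 {Ω : Type*} [MeasurableSpace Ω] (μ : Measure Ω) [IsProbabilityMeasure μ]
    {n m q N : ℕ} (P : Matrix (Fin n) (Fin m) ℝ)
    (hP0 : ∀ i j, 0 ≤ P i j) (hP1 : ∀ j, ∑ i, P i j = 1)
    (Q : Matrix (Fin m) (Fin q) ℝ) (α : Fin q → ℝ)
    (g : Fin m → ℝ)
    (hg : ∀ j, g j = Real.exp ((∑ k, Q j k * α k)
      - Real.log (∑ l, Real.exp (∑ k, Q l k * α k))))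
    (f : Fin n → ℝ) (hf : f = P.mulVec g) (hfpos : ∀ i, 0 < f i)
    (Qα : Matrix (Fin m) (Fin q) ℝ)
    (hQα : Qα = (Matrix.diagonal g - Matrix.of (fun j j' => g j * g j')) * Q)
    (I : Fin N → Ω → Fin n) (hmeas : ∀ k, Measurable (I k))
    (hdist : ∀ k i, (μ {ω | I k ω = i}).toReal = f i)
    (hindep : iIndepFun I μ)
    (y : Fin n → Ω → ℕ)
    (hy : ∀ i ω, y i ω = (Finset.univ.filter (fun k => I k ω = i)).card)
    (s : Fin q → Ω → ℝ)
    (hs : ∀ k ω, s k ω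
      = ∑ i, (Qαᵀ * Pᵀ * Matrix.diagonal (fun i' => (f i')⁻¹)) k i * (y i ω : ℝ)) :
    ∀ k l, ∫ ω, (s k ω - ∫ ω', s k ω' ∂μ) * (s l ω - ∫ ω', s l ω' ∂μ) ∂μ
      = N * (Qαᵀ * Pᵀ * Matrix.diagonal (fun i => (f i)⁻¹) * P * Qα) k l :=
  stmt14_general μ P hP1 Q α g hg f hfpos Qα hQα I hmeas hdist hindep y hy s hs
end

section
/- (Robbins' formula.) Let G be a probability measure on [0, ∞) (the prior on θ), and for x ∈ ℕ define the marginal f(x) = ∫ e^{-θ} θ^x / x! dG(θ). Then for every x ∈ ℕ, ∫ θ · e^{-θ} θ^x / x! dG(θ) = (x+1) f(x+1). Consequently, in the model θ ~ G, X | θ ~ Poisson(θ), for any x with f(x) > 0 the posterior expectation satisfies E{θ | X = x} = ∫ θ e^{-θ} θ^x dG(θ) / ∫ e^{-θ} θ^x dG(θ) = (x+1) f(x+1)/f(x). -/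
open MeasureTheory

/-- Robbins' formula: with prior `G` on `[0,∞)` and marginal
`f(x) = ∫ e^{−θ}θˣ/x! dG(θ)`, one has `∫ θ·e^{−θ}θˣ/x! dG(θ) = (x+1) f(x+1)` for every
`x ∈ ℕ`; consequently, whenever `f(x) > 0`, the posterior expectation in the model
`θ ~ G`, `X | θ ~ Poisson(θ)` satisfies
`E{θ | X = x} = ∫ θe^{−θ}θˣ dG / ∫ e^{−θ}θˣ dG = (x+1) f(x+1)/f(x)`. -/
theorem stmt16 (G : Measure ℝ) [IsProbabilityMeasure G]
    (hsupp : ∀ᵐ θ ∂G, 0 ≤ θ)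
    (f : ℕ → ℝ)
    (hf : ∀ x : ℕ, f x = ∫ θ, Real.exp (-θ) * θ ^ x / (Nat.factorial x) ∂G) :
    ∀ x : ℕ,
      (∫ θ, θ * (Real.exp (-θ) * θ ^ x / (Nat.factorial x)) ∂G
        = ((x : ℝ) + 1) * f (x + 1)) ∧
      (0 < f x →
        (∫ θ, θ * (Real.exp (-θ) * θ ^ x) ∂G) / (∫ θ, Real.exp (-θ) * θ ^ x ∂G)
          = ((x : ℝ) + 1) * f (x + 1) / f x) := by
  intro x
  have hfacx : ((Nat.factorial x : ℝ)) ≠ 0 := by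
    exact_mod_cast Nat.factorial_ne_zero x
  have hfacs : ((Nat.factorial (x + 1) : ℝ)) = ((x : ℝ) + 1) * (Nat.factorial x : ℝ) := by
    rw [Nat.factorial_succ]; push_cast; ring
  have h1 : ∫ θ, θ * (Real.exp (-θ) * θ ^ x / (Nat.factorial x)) ∂G
      = ((x : ℝ) + 1) * f (x + 1) := by
    rw [hf (x + 1), ← integral_const_mul]
    refine integral_congr_ae (Filter.Eventually.of_forall fun θ => ?_)
    rw [hfacs]
    have hx1 : ((x : ℝ) + 1) ≠ 0 := by positivity
    field_simp
    ring
  refine ⟨h1, fun hpos => ?_⟩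
  have hA : ∫ θ, θ * (Real.exp (-θ) * θ ^ x) ∂G
      = (Nat.factorial x : ℝ) * (((x : ℝ) + 1) * f (x + 1)) := by
    rw [← h1, ← integral_const_mul]
    refine integral_congr_ae (Filter.Eventually.of_forall fun θ => ?_)
    field_simp
  have hB : ∫ θ, Real.exp (-θ) * θ ^ x ∂G = (Nat.factorial x : ℝ) * f x := by
    rw [hf x, ← integral_const_mul]
    refine integral_congr_ae (Filter.Eventually.of_forall fun θ => ?_)
    field_simp
  rw [hA, hB, mul_div_mul_left _ _ hfacx]
end

section
/- (Tweedie's formula for the normal model.) Let G be a probability measure on ℝ (the prior on θ), let φ(z) = e^{-z²/2}/√(2π) be the standard normal density, and define the marginal density f(x) = ∫ φ(x − θ) dG(θ). Then f is differentiable at every x ∈ ℝ with f'(x) = ∫ (θ − x) φ(x − θ) dG(θ), and at every x with f(x) > 0 the posterior expectation in the model θ ~ G, X | θ ~ N(θ, 1) satisfies E{θ | X = x} = ∫ θ φ(x − θ) dG(θ) / f(x) = x + l'(x), where l(x) = log f(x). -/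
open MeasureTheory

/-!
Differentiating `x ↦ ∫ φ(x - θ) dG(θ)` under the integral sign is legitimate for any finite
measure `G` as soon as `φ` and `φ'` are bounded, which holds for the standard normal density
since `|z| e^{-z²/2} ≤ 1`. As `φ'(z) = -z φ(z)`, the derivative is `f'(x) = ∫ (θ - x) φ(x - θ) dG`,
and splitting `θ = (θ - x) + x` in the numerator of the posterior mean gives `x + f'(x)/f(x)`.
-/

section ConvolutionWithFiniteMeasure

variable {G : Measure ℝ} [IsFiniteMeasure G] {φ : ℝ → ℝ} {C C' : ℝ}

theorem integrable_comp_sub_of_abs_le (hφ : Measurable φ) (hC : ∀ z, |φ z| ≤ C) (x : ℝ) :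
    Integrable (fun θ => φ (x - θ)) G :=
  Integrable.of_bound (hφ.comp (measurable_const.sub measurable_id)).aestronglyMeasurable C
    (ae_of_all _ fun θ => hC (x - θ))

theorem hasDerivAt_integral_comp_sub (hφ : Differentiable ℝ φ) (hC : ∀ z, |φ z| ≤ C)
    (hC' : ∀ z, |deriv φ z| ≤ C') (x : ℝ) :
    HasDerivAt (fun x => ∫ θ, φ (x - θ) ∂G) (∫ θ, deriv φ (x - θ) ∂G) x :=
  (hasDerivAt_integral_of_dominated_loc_of_deriv_le (bound := fun _ => C')
    (Metric.ball_mem_nhds x one_pos)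
    (.of_forall fun y => (integrable_comp_sub_of_abs_le hφ.continuous.measurable hC y).1)
    (integrable_comp_sub_of_abs_le hφ.continuous.measurable hC x)
    (integrable_comp_sub_of_abs_le (measurable_deriv φ) hC' x).1
    (ae_of_all _ fun θ y _ => hC' (y - θ)) (integrable_const C')
    (ae_of_all _ fun θ y _ => (hφ (y - θ)).hasDerivAt.comp_sub_const y θ)).2

end ConvolutionWithFiniteMeasure

theorem integral_mul_eq_integral_sub_mul_add {G : Measure ℝ} {ψ : ℝ → ℝ} (x : ℝ)
    (hψ : Integrable ψ G) (hψ' : Integrable (fun θ => (θ - x) * ψ θ) G) :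
    ∫ θ, θ * ψ θ ∂G = ∫ θ, (θ - x) * ψ θ ∂G + x * ∫ θ, ψ θ ∂G := by
  rw [← integral_const_mul, ← integral_add hψ' (hψ.const_mul x)]
  congr 1 with θ
  ring

noncomputable def stdNormalPDF (z : ℝ) : ℝ := Real.exp (-z ^ 2 / 2) / Real.sqrt (2 * Real.pi)

theorem stdNormalPDF_nonneg (z : ℝ) : 0 ≤ stdNormalPDF z := by
  unfold stdNormalPDF
  positivity

theorem one_le_sqrt_two_pi : 1 ≤ Real.sqrt (2 * Real.pi) :=
  Real.one_le_sqrt.2 (by nlinarith [Real.pi_gt_three])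

theorem abs_stdNormalPDF_le_one (z : ℝ) : |stdNormalPDF z| ≤ 1 := by
  rw [abs_of_nonneg (stdNormalPDF_nonneg z), stdNormalPDF, div_le_one (by positivity)]
  calc Real.exp (-z ^ 2 / 2) ≤ 1 := Real.exp_le_one_iff.2 (by nlinarith [sq_nonneg z])
    _ ≤ Real.sqrt (2 * Real.pi) := one_le_sqrt_two_pi

theorem hasDerivAt_stdNormalPDF (z : ℝ) : HasDerivAt stdNormalPDF (-z * stdNormalPDF z) z := by
  have h : HasDerivAt (fun y : ℝ => -y ^ 2 / 2) (-z) z :=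
    ((hasDerivAt_pow 2 z).neg.div_const 2).congr_deriv (by ring)
  exact (h.exp.div_const (Real.sqrt (2 * Real.pi))).congr_deriv (by rw [stdNormalPDF]; ring)

theorem differentiable_stdNormalPDF : Differentiable ℝ stdNormalPDF :=
  fun z => (hasDerivAt_stdNormalPDF z).differentiableAt

theorem deriv_stdNormalPDF (z : ℝ) : deriv stdNormalPDF z = -z * stdNormalPDF z :=
  (hasDerivAt_stdNormalPDF z).deriv

theorem abs_deriv_stdNormalPDF_le_one (z : ℝ) : |deriv stdNormalPDF z| ≤ 1 := by
  rw [deriv_stdNormalPDF, abs_mul, abs_neg, abs_of_nonneg (stdNormalPDF_nonneg z), stdNormalPDF,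
    mul_div_assoc', div_le_one (by positivity), show -z ^ 2 / 2 = -(z ^ 2 / 2) by ring,
    Real.exp_neg, ← div_eq_mul_inv, div_le_iff₀ (Real.exp_pos _)]
  calc |z| ≤ z ^ 2 / 2 + 1 := by nlinarith [sq_abs z, sq_nonneg (|z| - 1)]
    _ ≤ Real.exp (z ^ 2 / 2) := Real.add_one_le_exp _
    _ ≤ Real.sqrt (2 * Real.pi) * Real.exp (z ^ 2 / 2) :=
      le_mul_of_one_le_left (Real.exp_pos _).le one_le_sqrt_two_pi

/-- Tweedie's formula for the normal model: with prior `G` on `ℝ`, standard normal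
density `φ`, and marginal `f(x) = ∫ φ(x − θ) dG(θ)`, the marginal is differentiable with
`f'(x) = ∫ (θ − x) φ(x − θ) dG(θ)`, and at every `x` with `f(x) > 0` the posterior
expectation satisfies `E{θ | X = x} = ∫ θ φ(x − θ) dG(θ) / f(x) = x + l'(x)` with
`l'(x) = f'(x)/f(x)`. -/
theorem stmt17 (G : Measure ℝ) [IsProbabilityMeasure G]
    (φ : ℝ → ℝ) (hφ : ∀ z, φ z = Real.exp (-z ^ 2 / 2) / Real.sqrt (2 * Real.pi))
    (f : ℝ → ℝ) (hf : ∀ x, f x = ∫ θ, φ (x - θ) ∂G) :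
    (∀ x, HasDerivAt f (∫ θ, (θ - x) * φ (x - θ) ∂G) x) ∧
    (∀ x, 0 < f x →
      (∫ θ, θ * φ (x - θ) ∂G) / f x = x + deriv f x / f x) := by
  obtain rfl : φ = stdNormalPDF := funext hφ
  obtain rfl : f = fun x => ∫ θ, stdNormalPDF (x - θ) ∂G := funext hf
  have hderiv (x : ℝ) : HasDerivAt (fun x => ∫ θ, stdNormalPDF (x - θ) ∂G)
      (∫ θ, (θ - x) * stdNormalPDF (x - θ) ∂G) x := by
    simpa only [deriv_stdNormalPDF, neg_sub] using hasDerivAt_integral_comp_sub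
      differentiable_stdNormalPDF abs_stdNormalPDF_le_one abs_deriv_stdNormalPDF_le_one x
  refine ⟨hderiv, fun x hfx => ?_⟩
  have hmoment : Integrable (fun θ => (θ - x) * stdNormalPDF (x - θ)) G := by
    simpa only [deriv_stdNormalPDF, neg_sub] using
      integrable_comp_sub_of_abs_le (measurable_deriv _) abs_deriv_stdNormalPDF_le_one x
  rw [(hderiv x).deriv, integral_mul_eq_integral_sub_mul_add x (integrable_comp_sub_of_abs_le
    differentiable_stdNormalPDF.continuous.measurable abs_stdNormalPDF_le_one x) hmoment]
  field_simp
  ring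
end
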